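/- For a graph G with a perfect matching and maximum degree Δ, the minimum forcing number satisfies f(G) ≤ af(G) ≤ (Δ−1)·f(G), and the maximum forcing number satisfies F(G) ≤ Af(G) ≤ (Δ−1)·F(G). -/

import Mathlib

open SimpleGraph

variable {V : Type*}

/-- A closed walk is an `M`-alternating cycle: it is a cycle and its edges alternate
(cyclically) between `M` and the complement of `M`. -/
def SimpleGraph.IsAltCycle (G : SimpleGraph V) (M : Set (Sym2 V)) {v : V} (c : G.Walk v v) :
    Prop :=
  c.IsCycle ∧ List.Chain' (fun e f => (e ∈ M ↔ f ∉ M)) c.edges ∧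
    ∀ e f, c.edges.head? = some e → c.edges.getLast? = some f → (f ∈ M ↔ e ∉ M)

/-- `S` is a forcing set of the perfect matching `M`: `S ⊆ M` and `M` is the unique
perfect matching of `G` containing `S`. -/
def SimpleGraph.IsForcingSet (G : SimpleGraph V) (M : G.Subgraph) (S : Set (Sym2 V)) : Prop :=
  S ⊆ M.edgeSet ∧ ∀ N : G.Subgraph, N.IsPerfectMatching → S ⊆ N.edgeSet → N = M

/-- `S` is an anti-forcing set of the perfect matching `M`: `S` consists of edges of `G`
not in `M`, and `M` is the unique perfect matching of `G - S` (equivalently, the unique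
perfect matching of `G` whose edge set avoids `S`). -/
def SimpleGraph.IsAntiForcingSet (G : SimpleGraph V) (M : G.Subgraph) (S : Set (Sym2 V)) :
    Prop :=
  S ⊆ G.edgeSet \ M.edgeSet ∧
    ∀ N : G.Subgraph, N.IsPerfectMatching → Disjoint N.edgeSet S → N = M

/-- The forcing number `f(G,M)`. -/
noncomputable def SimpleGraph.forcingNum (G : SimpleGraph V) (M : G.Subgraph) : ℕ :=
  sInf {n | ∃ S : Set (Sym2 V), G.IsForcingSet M S ∧ S.ncard = n}

/-- The anti-forcing number `af(G,M)`. -/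
noncomputable def SimpleGraph.antiForcingNum (G : SimpleGraph V) (M : G.Subgraph) : ℕ :=
  sInf {n | ∃ S : Set (Sym2 V), G.IsAntiForcingSet M S ∧ S.ncard = n}

/-!
An anti-forcing set `S` of `M` yields a forcing set of at most the same size: replace each
`e ∈ S` by the `M`-edge at one of its endpoints, since a perfect matching containing that
`M`-edge cannot contain `e`. Conversely, for a forcing set `S`, forbidding at one endpoint of each
`e ∈ S` the at most `Δ - 1` other edges there yields an anti-forcing set, since a perfect matching
avoiding them must use `e`. The resulting inequalities `f(G,M) ≤ af(G,M) ≤ (Δ - 1) f(G,M)` hold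
for every perfect matching `M`, so they pass to the minimum and the maximum over `M`.
-/

lemma Set.Finite.ncard_biUnion_le_mul {ι α : Type*} {t : Set ι} (ht : t.Finite)
    {s : ι → Set α} {k : ℕ} (h : ∀ i ∈ t, (s i).ncard ≤ k) :
    (⋃ i ∈ t, s i).ncard ≤ k * t.ncard := by
  calc (⋃ i ∈ t, s i).ncard ≤ ∑ i ∈ ht.toFinset, (s i).ncard := by
        simpa using ht.toFinset.set_ncard_biUnion_le s
    _ ≤ ht.toFinset.card • k := Finset.sum_le_card_nsmul _ _ _ (by simpa using h)
    _ = k * t.ncard := by rw [smul_eq_mul, mul_comm, Set.ncard_eq_toFinset_card t ht]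

lemma Nat.sInf_image_le_of_le {ι : Type*} {s : Set ι} {f g : ι → ℕ} {φ : ℕ → ℕ}
    (h : ∀ i ∈ s, f i ≤ φ (g i)) : sInf (f '' s) ≤ φ (sInf (g '' s)) := by
  rcases s.eq_empty_or_nonempty with rfl | hs
  · simp
  obtain ⟨i, hi, hgi⟩ := Nat.sInf_mem (hs.image g)
  calc sInf (f '' s) ≤ f i := Nat.sInf_le (Set.mem_image_of_mem f hi)
    _ ≤ φ (g i) := h i hi
    _ = φ (sInf (g '' s)) := by rw [hgi]

lemma Nat.sSup_image_le_of_le {ι : Type*} [Finite ι] {s : Set ι} {f g : ι → ℕ} {φ : ℕ → ℕ}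
    (hφ : Monotone φ) (h : ∀ i ∈ s, f i ≤ φ (g i)) : sSup (f '' s) ≤ φ (sSup (g '' s)) := by
  rcases s.eq_empty_or_nonempty with rfl | hs
  · simp
  obtain ⟨i, hi, hfi⟩ := Nat.sSup_mem (hs.image f) (s.toFinite.image f).bddAbove
  calc sSup (f '' s) = f i := hfi.symm
    _ ≤ φ (g i) := h i hi
    _ ≤ φ (sSup (g '' s)) :=
        hφ (le_csSup (s.toFinite.image g).bddAbove (Set.mem_image_of_mem g hi))

namespace SimpleGraph

variable {G : SimpleGraph V} {M N : G.Subgraph}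

lemma ncard_incidenceSet_diff_singleton [Fintype V] [DecidableRel G.Adj] {v : V} {e : Sym2 V}
    (he : e ∈ G.incidenceSet v) : (G.incidenceSet v \ {e}).ncard = G.degree v - 1 := by
  classical
  rw [Set.ncard_sdiff_singleton_of_mem he, ← coe_incidenceFinset, Set.ncard_coe_finset,
    card_incidenceFinset_eq_degree]

lemma Subgraph.IsMatching.eq_of_mem_edgeSet {v : V} {e f : Sym2 V} (hM : M.IsMatching)
    (he : e ∈ M.edgeSet) (hf : f ∈ M.edgeSet) (hve : v ∈ e) (hvf : v ∈ f) : e = f := by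
  obtain ⟨u, rfl⟩ := Sym2.mem_iff_exists.mp hve
  obtain ⟨w, rfl⟩ := Sym2.mem_iff_exists.mp hvf
  rw [hM.eq_of_adj_left (M.mem_edgeSet.mp he) (M.mem_edgeSet.mp hf)]

lemma Subgraph.IsPerfectMatching.exists_mem_edgeSet (hM : M.IsPerfectMatching) (v : V) :
    ∃ e ∈ M.edgeSet, v ∈ e :=
  have ⟨w, hvw, _⟩ := hM.1 (hM.2 v)
  ⟨s(v, w), hvw, Sym2.mem_mk_left v w⟩

lemma Subgraph.IsPerfectMatching.eq_of_edgeSet_subset (hM : M.IsPerfectMatching)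
    (hN : N.IsMatching) (h : M.edgeSet ⊆ N.edgeSet) : N = M := by
  refine Subgraph.IsMatching.injOn_edgeSet hN hM.1 (h.antisymm' fun e he => ?_)
  obtain ⟨f, hfM, hvf⟩ := hM.exists_mem_edgeSet e.out.1
  rwa [hN.eq_of_mem_edgeSet he (h hfM) (Sym2.out_fst_mem e) hvf]

lemma isForcingSet_edgeSet (hM : M.IsPerfectMatching) : G.IsForcingSet M M.edgeSet :=
  ⟨subset_rfl, fun _ hN hsub => hM.eq_of_edgeSet_subset hN.1 hsub⟩

lemma isAntiForcingSet_edgeSet_diff (hM : M.IsPerfectMatching) :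
    G.IsAntiForcingSet M (G.edgeSet \ M.edgeSet) := by
  refine ⟨subset_rfl, fun N hN hdisj => (hN.eq_of_edgeSet_subset hM.1 fun e he => ?_).symm⟩
  by_contra heM
  exact Set.disjoint_left.mp hdisj he ⟨N.edgeSet_subset he, heM⟩

lemma forcingNum_le_ncard {S : Set (Sym2 V)} (hS : G.IsForcingSet M S) :
    G.forcingNum M ≤ S.ncard :=
  Nat.sInf_le ⟨S, hS, rfl⟩

lemma antiForcingNum_le_ncard {S : Set (Sym2 V)} (hS : G.IsAntiForcingSet M S) :
    G.antiForcingNum M ≤ S.ncard :=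
  Nat.sInf_le ⟨S, hS, rfl⟩

lemma exists_isForcingSet_ncard_eq_forcingNum (hM : M.IsPerfectMatching) :
    ∃ S, G.IsForcingSet M S ∧ S.ncard = G.forcingNum M :=
  Nat.sInf_mem (s := {n | ∃ S : Set (Sym2 V), G.IsForcingSet M S ∧ S.ncard = n})
    ⟨_, _, isForcingSet_edgeSet hM, rfl⟩

lemma exists_isAntiForcingSet_ncard_eq_antiForcingNum (hM : M.IsPerfectMatching) :
    ∃ S, G.IsAntiForcingSet M S ∧ S.ncard = G.antiForcingNum M :=
  Nat.sInf_mem (s := {n | ∃ S : Set (Sym2 V), G.IsAntiForcingSet M S ∧ S.ncard = n})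
    ⟨_, _, isAntiForcingSet_edgeSet_diff hM, rfl⟩

lemma IsAntiForcingSet.isForcingSet_image {S : Set (Sym2 V)} (hS : G.IsAntiForcingSet M S)
    {φ : Sym2 V → Sym2 V} (hφM : ∀ e ∈ S, φ e ∈ M.edgeSet) (hφ : ∀ e ∈ S, ∃ v ∈ e, v ∈ φ e) :
    G.IsForcingSet M (φ '' S) := by
  refine ⟨Set.image_subset_iff.mpr hφM, fun N hN hsub => hS.2 N hN ?_⟩
  refine Set.disjoint_right.mpr fun e heS heN => (hS.1 heS).2 ?_
  obtain ⟨v, hve, hvφ⟩ := hφ e heS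
  rw [hN.1.eq_of_mem_edgeSet heN (hsub (Set.mem_image_of_mem φ heS)) hve hvφ]
  exact hφM e heS

lemma IsForcingSet.isAntiForcingSet_biUnion {S : Set (Sym2 V)} (hM : M.IsPerfectMatching)
    (hS : G.IsForcingSet M S) {c : Sym2 V → V} (hc : ∀ e ∈ S, c e ∈ e) :
    G.IsAntiForcingSet M (⋃ e ∈ S, G.incidenceSet (c e) \ {e}) := by
  constructor
  · simp only [Set.iUnion_subset_iff]
    rintro e heS f ⟨⟨hfG, hcf⟩, hfe⟩
    exact ⟨hfG, fun hfM => hfe (hM.1.eq_of_mem_edgeSet hfM (hS.1 heS) hcf (hc e heS))⟩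
  · refine fun N hN hdisj => hS.2 N hN fun e heS => ?_
    obtain ⟨f, hfN, hcf⟩ := hN.exists_mem_edgeSet (c e)
    have hf : f ∉ G.incidenceSet (c e) \ {e} := fun hf =>
      Set.disjoint_left.mp hdisj hfN (Set.mem_biUnion heS hf)
    obtain rfl : f = e := by_contra fun hfe => hf ⟨⟨N.edgeSet_subset hfN, hcf⟩, hfe⟩
    exact hfN

lemma forcingNum_le_antiForcingNum [Finite V] (hM : M.IsPerfectMatching) :
    G.forcingNum M ≤ G.antiForcingNum M := by
  obtain ⟨S, hS, hcard⟩ := exists_isAntiForcingSet_ncard_eq_antiForcingNum hM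
  choose φ hφM hφ using fun e : Sym2 V => hM.exists_mem_edgeSet e.out.1
  calc G.forcingNum M ≤ (φ '' S).ncard :=
        forcingNum_le_ncard (hS.isForcingSet_image (fun e _ => hφM e)
          fun e _ => ⟨e.out.1, Sym2.out_fst_mem e, hφ e⟩)
    _ ≤ S.ncard := Set.ncard_image_le S.toFinite
    _ = G.antiForcingNum M := hcard

lemma antiForcingNum_le_maxDegree_sub_one_mul [Fintype V] [DecidableRel G.Adj]
    (hM : M.IsPerfectMatching) :
    G.antiForcingNum M ≤ (G.maxDegree - 1) * G.forcingNum M := by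
  obtain ⟨S, hS, hcard⟩ := exists_isForcingSet_ncard_eq_forcingNum hM
  have hdeg : ∀ e ∈ S, (G.incidenceSet e.out.1 \ {e}).ncard ≤ G.maxDegree - 1 := fun e heS => by
    have he : e ∈ G.incidenceSet e.out.1 := ⟨M.edgeSet_subset (hS.1 heS), Sym2.out_fst_mem e⟩
    rw [ncard_incidenceSet_diff_singleton he]
    exact Nat.sub_le_sub_right (G.degree_le_maxDegree _) 1
  calc G.antiForcingNum M ≤ (⋃ e ∈ S, G.incidenceSet e.out.1 \ {e}).ncard :=
        antiForcingNum_le_ncard (hS.isAntiForcingSet_biUnion hM fun e _ => Sym2.out_fst_mem e)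
    _ ≤ (G.maxDegree - 1) * S.ncard := S.toFinite.ncard_biUnion_le_mul hdeg
    _ = (G.maxDegree - 1) * G.forcingNum M := by rw [hcard]

end SimpleGraph

theorem min_max_forcing_antiforcing_bounds_general (G : SimpleGraph V) [Fintype V]
    [DecidableRel G.Adj] :
    (sInf {n | ∃ M : G.Subgraph, M.IsPerfectMatching ∧ G.forcingNum M = n} ≤
        sInf {n | ∃ M : G.Subgraph, M.IsPerfectMatching ∧ G.antiForcingNum M = n} ∧
      sInf {n | ∃ M : G.Subgraph, M.IsPerfectMatching ∧ G.antiForcingNum M = n} ≤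
        (G.maxDegree - 1) *
          sInf {n | ∃ M : G.Subgraph, M.IsPerfectMatching ∧ G.forcingNum M = n}) ∧
    (sSup {n | ∃ M : G.Subgraph, M.IsPerfectMatching ∧ G.forcingNum M = n} ≤
        sSup {n | ∃ M : G.Subgraph, M.IsPerfectMatching ∧ G.antiForcingNum M = n} ∧
      sSup {n | ∃ M : G.Subgraph, M.IsPerfectMatching ∧ G.antiForcingNum M = n} ≤
        (G.maxDegree - 1) *
          sSup {n | ∃ M : G.Subgraph, M.IsPerfectMatching ∧ G.forcingNum M = n}) :=
  ⟨⟨Nat.sInf_image_le_of_le (φ := id) fun _ => forcingNum_le_antiForcingNum,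
      Nat.sInf_image_le_of_le fun _ => antiForcingNum_le_maxDegree_sub_one_mul⟩,
    Nat.sSup_image_le_of_le monotone_id fun _ => forcingNum_le_antiForcingNum,
    Nat.sSup_image_le_of_le (monotone_id.const_mul' _) fun _ =>
      antiForcingNum_le_maxDegree_sub_one_mul⟩

/-- For a graph `G` with a perfect matching and maximum degree `Δ`, the minimum forcing
and anti-forcing numbers satisfy `f(G) ≤ af(G) ≤ (Δ−1)·f(G)`, and the maximum ones
satisfy `F(G) ≤ Af(G) ≤ (Δ−1)·F(G)`. -/
theorem min_max_forcing_antiforcing_bounds (G : SimpleGraph V) [Fintype V]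
    [DecidableRel G.Adj] (hG : ∃ M : G.Subgraph, M.IsPerfectMatching) :
    (sInf {n | ∃ M : G.Subgraph, M.IsPerfectMatching ∧ G.forcingNum M = n} ≤
        sInf {n | ∃ M : G.Subgraph, M.IsPerfectMatching ∧ G.antiForcingNum M = n} ∧
      sInf {n | ∃ M : G.Subgraph, M.IsPerfectMatching ∧ G.antiForcingNum M = n} ≤
        (G.maxDegree - 1) *
          sInf {n | ∃ M : G.Subgraph, M.IsPerfectMatching ∧ G.forcingNum M = n}) ∧
    (sSup {n | ∃ M : G.Subgraph, M.IsPerfectMatching ∧ G.forcingNum M = n} ≤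
        sSup {n | ∃ M : G.Subgraph, M.IsPerfectMatching ∧ G.antiForcingNum M = n} ∧
      sSup {n | ∃ M : G.Subgraph, M.IsPerfectMatching ∧ G.antiForcingNum M = n} ≤
        (G.maxDegree - 1) *
          sSup {n | ∃ M : G.Subgraph, M.IsPerfectMatching ∧ G.forcingNum M = n}) :=
  min_max_forcing_antiforcing_bounds_general G
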